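/- arXiv:1210.5176 — 3 statements merged into one kernel-verified Lean document; each statement's English description precedes it below -/
import Mathlib

section
/- Let c be a proper edge coloring of a graph G and let v be a vertex at which color a appears but color b does not appear (a ≠ b). Then the connected component of v in the subgraph induced by edges colored a or b is a path with endpoint v. -/
/-!
In the `a,b`-subgraph every vertex has degree at most two, since a proper coloring gives the
edges at a vertex distinct colors, and `v` has degree at most one, since all its edges there
are colored `a`. Grow a path ending at `v` from its other end: while that end `u` has an edge
`uy` off the path, `y` is a new vertex (every other vertex of the path already has all its edges
on the path), and after adding `uy` all edges at `u` lie on the path by the degree bounds. By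
finiteness this stops at a path carrying every edge at each of its vertices, which is then the
whole component of `v`.
-/

open Finset SimpleGraph

def IsProperEdgeColoring {V : Type*} {α : Type*} (G : SimpleGraph V) (c : Sym2 V → α) : Prop :=
  ∀ v w₁ w₂, G.Adj v w₁ → G.Adj v w₂ → w₁ ≠ w₂ → c s(v, w₁) ≠ c s(v, w₂)

/-- The spanning subgraph of `G` consisting of the edges colored `a` or `b`. -/
def twoColorSubgraph {V : Type*} (G : SimpleGraph V) (c : Sym2 V → ℕ) (a b : ℕ) :
    SimpleGraph V where
  Adj x y := G.Adj x y ∧ (c s(x, y) = a ∨ c s(x, y) = b)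
  symm := ⟨by
    intro x y ⟨h, h'⟩
    exact ⟨h.symm, by rwa [Sym2.eq_swap]⟩⟩
  loopless := ⟨fun x ⟨h, _⟩ => G.loopless.irrefl x h⟩

theorem Set.eq_or_eq_of_encard_le_two {α : Type*} {s : Set α} (hs : s.encard ≤ 2) {x y z : α}
    (hx : x ∈ s) (hy : y ∈ s) (hxy : x ≠ y) (hz : z ∈ s) : z = x ∨ z = y := by
  by_contra! h
  have h3 : ({z, x, y} : Set α).encard = 3 := encard_eq_three.mpr ⟨z, x, y, h.1, h.2, hxy, rfl⟩
  have hle : ({z, x, y} : Set α).encard ≤ s.encard :=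
    encard_le_encard (by simp [insert_subset_iff, hx, hy, hz])
  have : (3 : ℕ∞) ≤ 2 := h3 ▸ hle.trans hs
  norm_num at this

namespace SimpleGraph

variable {V : Type*} {G : SimpleGraph V}

namespace Walk

def CoversEdgesAt {u w : V} (P : G.Walk u w) (x : V) : Prop :=
  ∀ y, G.Adj x y → s(x, y) ∈ P.edges

theorem CoversEdgesAt.cons {t u w x : V} {P : G.Walk u w} (hx : P.CoversEdgesAt x)
    (h : G.Adj t u) : (Walk.cons h P).CoversEdgesAt x :=
  fun y hy => List.mem_cons_of_mem _ (hx y hy)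

@[simp]
theorem coversEdgesAt_reverse {u w x : V} (P : G.Walk u w) :
    P.reverse.CoversEdgesAt x ↔ P.CoversEdgesAt x := by
  simp [CoversEdgesAt, edges_reverse]

theorem mem_support_of_reachable {u w x y : V} {P : G.Walk u w}
    (hP : ∀ z ∈ P.support, P.CoversEdgesAt z) (hx : x ∈ P.support) (hxy : G.Reachable x y) :
    y ∈ P.support := by
  obtain ⟨W⟩ := hxy
  induction W with
  | nil => exact hx
  | cons h _ ih => exact ih (P.snd_mem_support_of_mem_edges (hP _ hx _ h))

theorem exists_cons_isPath_of_not_coversEdgesAt (hdeg : ∀ x, (G.neighborSet x).encard ≤ 2)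
    {v : V} (hv : (G.neighborSet v).encard ≤ 1) {u : V} {P : G.Walk u v} (hP : P.IsPath)
    (hinv : ∀ x ∈ P.support, x ≠ u → P.CoversEdgesAt x) (hu : ¬P.CoversEdgesAt u) :
    ∃ y, ∃ h : G.Adj y u, (Walk.cons h P).IsPath ∧
      ∀ x ∈ (Walk.cons h P).support, x ≠ y → (Walk.cons h P).CoversEdgesAt x := by
  obtain ⟨y, huy, hnew⟩ : ∃ y, G.Adj u y ∧ s(u, y) ∉ P.edges := by
    simpa [CoversEdgesAt] using hu
  have hy : y ∉ P.support := fun hy =>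
    hnew (Sym2.eq_swap ▸ hinv y hy huy.ne' u huy.symm)
  refine ⟨y, huy.symm, hP.cons hy, fun x hx hxy => ?_⟩
  rw [support_cons, List.mem_cons, or_iff_right hxy] at hx
  by_cases hxu : x = u
  · subst hxu
    intro z hz
    suffices z = y ∨ s(x, z) ∈ P.edges by
      rcases this with rfl | h
      · exact List.mem_cons.mpr (Or.inl Sym2.eq_swap)
      · exact List.mem_cons_of_mem _ h
    cases P with
    | nil => exact Or.inl (Set.encard_le_one_iff.mp hv z y hz huy)
    | @cons _ p _ hp _ =>
      have hpy : p ≠ y := by rintro rfl; exact hnew (by simp)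
      rcases Set.eq_or_eq_of_encard_le_two (hdeg x) hp huy hpy hz with rfl | rfl
      · exact Or.inr (by simp)
      · exact Or.inl rfl
  · exact (hinv x hx hxu).cons _

theorem exists_isPath_coversEdgesAt_of_isPath [Fintype V]
    (hdeg : ∀ x, (G.neighborSet x).encard ≤ 2) {v : V} (hv : (G.neighborSet v).encard ≤ 1)
    {u : V} {P : G.Walk u v} (hP : P.IsPath)
    (hinv : ∀ x ∈ P.support, x ≠ u → P.CoversEdgesAt x) :
    ∃ w, ∃ Q : G.Walk w v, Q.IsPath ∧ ∀ x ∈ Q.support, Q.CoversEdgesAt x := by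
  by_cases hu : P.CoversEdgesAt u
  · refine ⟨u, P, hP, fun x hx => ?_⟩
    by_cases hxu : x = u
    · exact hxu ▸ hu
    · exact hinv x hx hxu
  · obtain ⟨_, _, hQ, hinvQ⟩ := exists_cons_isPath_of_not_coversEdgesAt hdeg hv hP hinv hu
    exact exists_isPath_coversEdgesAt_of_isPath hdeg hv hQ hinvQ
termination_by Fintype.card V - P.length
decreasing_by
  have := hQ.length_lt
  simp only [length_cons] at this ⊢
  omega

end Walk

theorem exists_isPath_support_eq_reachable [Fintype V] {v : V}
    (hdeg : ∀ x, (G.neighborSet x).encard ≤ 2) (hv : (G.neighborSet v).encard ≤ 1) :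
    ∃ (u : V) (P : G.Walk v u), P.IsPath ∧ (∀ x, x ∈ P.support ↔ G.Reachable v x) ∧
      ∀ e ∈ G.edgeSet, (∃ x ∈ e, G.Reachable v x) → e ∈ P.edges := by
  classical
  obtain ⟨u, Q, hQ, hcov⟩ := Walk.exists_isPath_coversEdgesAt_of_isPath hdeg hv
    (P := Walk.nil) Walk.IsPath.nil (fun x hx hxv => absurd (by simpa using hx) hxv)
  set P := Q.reverse
  have hcovP : ∀ x ∈ P.support, P.CoversEdgesAt x := by
    simpa [P, Walk.support_reverse] using hcov
  have hreach : ∀ x, G.Reachable v x → x ∈ P.support := fun x =>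
    Walk.mem_support_of_reachable hcovP P.start_mem_support
  refine ⟨u, P, (Walk.isPath_reverse_iff Q).mpr hQ,
    fun x => ⟨fun hx => (P.takeUntil x hx).reachable, hreach x⟩, fun e he => ?_⟩
  induction e using Sym2.ind with
  | _ x y =>
    rintro ⟨z, hz, hvz⟩
    rcases Sym2.mem_iff.mp hz with rfl | rfl
    · exact hcovP z (hreach z hvz) y he
    · exact Sym2.eq_swap ▸ hcovP z (hreach z hvz) x (G.adj_symm he)

end SimpleGraph

theorem IsProperEdgeColoring.injOn_neighborSet {V α : Type*} {G : SimpleGraph V}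
    {c : Sym2 V → α} (hc : IsProperEdgeColoring G c) (x : V) :
    Set.InjOn (fun y => c s(x, y)) (G.neighborSet x) :=
  fun _ h₁ _ h₂ h => by_contra fun hne => hc x _ _ h₁ h₂ hne h

section TwoColorSubgraph

variable {V : Type*} {G : SimpleGraph V} {c : Sym2 V → ℕ} {a b : ℕ}

theorem encard_neighborSet_twoColorSubgraph_le_two (hc : IsProperEdgeColoring G c) (x : V) :
    ((twoColorSubgraph G c a b).neighborSet x).encard ≤ 2 := by
  rw [← ((hc.injOn_neighborSet x).mono fun _ h => h.1).encard_image]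
  calc _ ≤ ({a, b} : Set ℕ).encard := Set.encard_le_encard (by rintro _ ⟨y, hy, rfl⟩; exact hy.2)
    _ ≤ 2 := (Set.encard_insert_le _ _).trans (by simp [one_add_one_eq_two])

theorem encard_neighborSet_twoColorSubgraph_le_one (hc : IsProperEdgeColoring G c) {v : V}
    (hb : ∀ w, G.Adj v w → c s(v, w) ≠ b) :
    ((twoColorSubgraph G c a b).neighborSet v).encard ≤ 1 :=
  Set.encard_le_one_iff.mpr fun y z hy hz => hc.injOn_neighborSet v hy.1 hz.1
    ((hy.2.resolve_right (hb y hy.1)).trans (hz.2.resolve_right (hb z hz.1)).symm)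

end TwoColorSubgraph

theorem stmt_7_general {V : Type*} [Fintype V] (G : SimpleGraph V)
    (c : Sym2 V → ℕ) (hc : IsProperEdgeColoring G c)
    (a b : ℕ) (v : V)
    (hb : ∀ w, G.Adj v w → c s(v, w) ≠ b) :
    ∃ (u : V) (P : (twoColorSubgraph G c a b).Walk v u), P.IsPath ∧
      (∀ x, x ∈ P.support ↔ (twoColorSubgraph G c a b).Reachable v x) ∧
      (∀ e ∈ (twoColorSubgraph G c a b).edgeSet,
        (∃ x ∈ e, (twoColorSubgraph G c a b).Reachable v x) → e ∈ P.edges) :=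
  exists_isPath_support_eq_reachable (encard_neighborSet_twoColorSubgraph_le_two hc)
    (encard_neighborSet_twoColorSubgraph_le_one hc hb)

theorem stmt_7 {V : Type*} [Fintype V] [DecidableEq V] (G : SimpleGraph V)
    [DecidableRel G.Adj] (c : Sym2 V → ℕ) (hc : IsProperEdgeColoring G c)
    (a b : ℕ) (hab : a ≠ b) (v : V)
    (ha : ∃ w, G.Adj v w ∧ c s(v, w) = a)
    (hb : ∀ w, G.Adj v w → c s(v, w) ≠ b) :
    ∃ (u : V) (P : (twoColorSubgraph G c a b).Walk v u), P.IsPath ∧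
      (∀ x, x ∈ P.support ↔ (twoColorSubgraph G c a b).Reachable v x) ∧
      (∀ e ∈ (twoColorSubgraph G c a b).edgeSet,
        (∃ x ∈ e, (twoColorSubgraph G c a b).Reachable v x) → e ∈ P.edges) :=
  stmt_7_general G c hc a b v hb
end

section
/- The binomial coefficient binom(2k−1, k−1) is odd if and only if k is a power of 2. -/
open Nat


lemma sumdig_pos (k : ℕ) (hk : 0 < k) : 0 < ((Nat.digits 2 k).sum) := by
  induction k using Nat.strong_induction_on with
  | _ k ih =>
    rw [Nat.digits_def' one_lt_two hk, List.sum_cons]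
    rcases Nat.eq_zero_or_pos (k % 2) with h | h
    · have hd : 0 < k / 2 := by omega
      have := ih (k / 2) (by omega) hd
      omega
    · omega

lemma sumdig_one_iff : ∀ k : ℕ, 0 < k → (((Nat.digits 2 k).sum = 1) ↔ ∃ m, k = 2 ^ m) := by
  intro k
  induction k using Nat.strong_induction_on with
  | _ k ih =>
    intro hk
    rw [Nat.digits_def' one_lt_two hk]
    rcases Nat.even_or_odd k with he | ho
    · obtain ⟨j, rfl⟩ := he
      have hj : 0 < j := by omega
      have : (j + j) % 2 = 0 := by omega
      rw [this]
      have : (j + j) / 2 = j := by omega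
      rw [this, List.sum_cons, zero_add, ih j (by omega) hj]
      constructor
      · rintro ⟨m, rfl⟩; exact ⟨m + 1, by ring⟩
      · rintro ⟨m, hm⟩
        match m, hm with
        | 0, hm => omega
        | m+1, hm => exact ⟨m, by rw [pow_succ] at hm; omega⟩
    · rcases Nat.lt_or_ge k 2 with h2 | h2
      · have : k = 1 := by omega
        subst this
        simp
        exact ⟨0, rfl⟩
      · have hmod : k % 2 = 1 := Nat.odd_iff.mp ho
        rw [hmod, List.sum_cons]
        have hd : 0 < k / 2 := by omega
        have := sumdig_pos (k / 2) hd
        constructor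
        · intro h; omega
        · rintro ⟨m, rfl⟩
          have : (2:ℕ) ^ m % 2 = 1 := hmod
          match m with
          | 0 => omega
          | m+1 => simp [pow_succ, Nat.mul_mod] at this

theorem stmt_14 (k : ℕ) (hk : 1 ≤ k) :
    Odd (Nat.choose (2 * k - 1) (k - 1)) ↔ ∃ m : ℕ, k = 2 ^ m := by
  obtain ⟨j, rfl⟩ : ∃ j, k = j + 1 := ⟨k - 1, by omega⟩
  set c := Nat.choose (2 * (j + 1) - 1) ((j + 1) - 1) with hc
  have hc' : c = Nat.choose (2 * j + 1) j := by rw [hc]; congr 1 <;> omega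
  have hcpos : 0 < c := by rw [hc']; exact Nat.choose_pos (by omega)
  have hcent : Nat.choose (2 * j + 2) (j + 1) = 2 * c := by
    have h1 : Nat.choose (2 * j + 1 + 1) (j + 1) =
        Nat.choose (2 * j + 1) j + Nat.choose (2 * j + 1) (j + 1) :=
      Nat.choose_succ_succ' (2 * j + 1) j
    rw [Nat.choose_symm_half] at h1
    rw [show 2 * j + 2 = 2 * j + 1 + 1 from rfl, h1, hc']
    ring
  -- Kummer's theorem
  have hkum : padicValNat 2 (Nat.choose ((j + 1) + (j + 1)) (j + 1)) =
      (Nat.digits 2 (j + 1)).sum := by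
    have h := sub_one_mul_padicValNat_choose_eq_sub_sum_digits' (p := 2)
      (n := j + 1) (k := j + 1)
    have hdd : Nat.digits 2 ((j + 1) + (j + 1)) = 0 :: Nat.digits 2 (j + 1) := by
      have h2 : ((j + 1) + (j + 1)) % 2 = 0 := by omega
      have h3 : ((j + 1) + (j + 1)) / 2 = j + 1 := by omega
      rw [Nat.digits_def' one_lt_two (by omega), h2, h3]
    rw [hdd, List.sum_cons, zero_add] at h
    omega
  have hval : padicValNat 2 c = (Nat.digits 2 (j + 1)).sum - 1 := by
    have heq : (j + 1) + (j + 1) = 2 * j + 2 := by ring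
    rw [heq, hcent, padicValNat.mul two_ne_zero (by omega),
      padicValNat.self one_lt_two] at hkum
    omega
  have hodd : Odd c ↔ padicValNat 2 c = 0 := by
    rw [Nat.odd_iff, padicValNat.eq_zero_iff]
    constructor
    · intro h; right; right; omega
    · rintro (h | h | h) <;> omega
  have hspos := sumdig_pos (j + 1) (by omega)
  rw [hodd, hval, ← sumdig_one_iff (j + 1) (by omega)]
  omega
end

section
/- If k ≥ 2 is a power of 2, then the odd graph O_k has chromatic index strictly greater than k (it is of class two). -/
open Finset SimpleGraph

/-- The odd graph O_k: vertices are the (k-1)-subsets of a (2k-1)-set,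
adjacent iff disjoint. -/
def oddGraph (k : ℕ) : SimpleGraph {s : Finset (Fin (2 * k - 1)) // s.card = k - 1} where
  Adj x y := x ≠ y ∧ Disjoint x.1 y.1
  symm := ⟨fun _ _ ⟨h, d⟩ => ⟨h.symm, d.symm⟩⟩
  loopless := ⟨fun _ ⟨h, _⟩ => h rfl⟩

instance (k : ℕ) : DecidableRel (oddGraph k).Adj := fun _ _ => (instDecidableAnd : Decidable (_ ∧ _))

/-!
A proper edge colouring of a `d`-regular graph with `d` colours uses every colour at every
vertex exactly once, so each colour class is a perfect matching and the graph has even order.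
The odd graph `O_k` is `k`-regular of order `binom(2k-1, k-1)`, and when `k = 2^m` this number
is odd by Lucas' theorem, since every binary digit of `2^(m+1) - 1` is `1`.
-/

theorem odd_choose_two_pow_sub_one (a : ℕ) {j : ℕ} (hj : j ≤ 2 ^ a - 1) :
    Odd ((2 ^ a - 1).choose j) := by
  induction a generalizing j with
  | zero =>
    obtain rfl : j = 0 := by simpa using hj
    simp
  | succ a ih =>
    have lucas := Choose.choose_modEq_choose_mod_mul_choose_div_nat
      (p := 2) (n := 2 ^ (a + 1) - 1) (k := j)
    have hpos : 1 ≤ 2 ^ a := Nat.one_le_two_pow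
    have hmod : (2 ^ (a + 1) - 1) % 2 = 1 := by omega
    have hdiv : (2 ^ (a + 1) - 1) / 2 = 2 ^ a - 1 := by omega
    have hone : Nat.choose 1 (j % 2) = 1 := by
      rcases Nat.mod_two_eq_zero_or_one j with h | h <;> simp [h]
    rw [hmod, hdiv, hone, one_mul] at lucas
    rw [Nat.odd_iff, lucas, ← Nat.odd_iff]
    exact ih (by omega)

section EdgeColoring

variable {V α : Type*} {G : SimpleGraph V} {c : Sym2 V → α}

theorem IsProperEdgeColoring.existsUnique_adj [Fintype α] [G.LocallyFinite]
    (hc : IsProperEdgeColoring G c) (hG : G.IsRegularOfDegree (Fintype.card α)) (v : V) (a : α) :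
    ∃! w, G.Adj v w ∧ c s(v, w) = a := by
  let g : G.neighborSet v → α := fun w => c s(v, w)
  have hinj : Function.Injective g := fun w₁ w₂ h => by
    by_contra hne
    exact hc v w₁ w₂ w₁.2 w₂.2 (fun h' => hne (Subtype.ext h')) h
  have hbij : Function.Bijective g := by
    rw [Fintype.bijective_iff_injective_and_card, card_neighborSet_eq_degree, hG v]
    exact ⟨hinj, rfl⟩
  obtain ⟨w, hw⟩ := hbij.2 a
  refine ⟨w, ⟨w.2, hw⟩, fun u ⟨hu, hua⟩ => ?_⟩
  exact congrArg Subtype.val (@hinj ⟨u, hu⟩ w (hua.trans hw.symm))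

def colorClass (G : SimpleGraph V) (c : Sym2 V → α) (a : α) : G.Subgraph where
  verts := Set.univ
  Adj v w := G.Adj v w ∧ c s(v, w) = a
  adj_sub h := h.1
  edge_vert _ := trivial
  symm := ⟨fun _ _ h => ⟨h.1.symm, by rw [Sym2.eq_swap]; exact h.2⟩⟩

theorem IsProperEdgeColoring.isPerfectMatching_colorClass [Fintype α] [G.LocallyFinite]
    (hc : IsProperEdgeColoring G c) (hG : G.IsRegularOfDegree (Fintype.card α)) (a : α) :
    (colorClass G c a).IsPerfectMatching :=
  Subgraph.isPerfectMatching_iff.2 fun v => hc.existsUnique_adj hG v a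

theorem IsProperEdgeColoring.even_card [Fintype V] [Fintype α] [Nonempty α] [G.LocallyFinite]
    (hc : IsProperEdgeColoring G c) (hG : G.IsRegularOfDegree (Fintype.card α)) :
    Even (Fintype.card V) :=
  (hc.isPerfectMatching_colorClass hG (Classical.arbitrary α)).even_card

end EdgeColoring

theorem oddGraph_adj_iff {k : ℕ} (hk : 2 ≤ k) {x y : {s : Finset (Fin (2 * k - 1)) // s.card = k - 1}} :
    (oddGraph k).Adj x y ↔ Disjoint x.1 y.1 := by
  refine ⟨And.right, fun hxy => ⟨?_, hxy⟩⟩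
  rintro rfl
  have hx : x.1.card = 0 := by simp [disjoint_self.mp hxy]
  have := x.2
  omega

theorem oddGraph_isRegularOfDegree {k : ℕ} (hk : 2 ≤ k) : (oddGraph k).IsRegularOfDegree k := by
  intro v
  have hcompl : v.1ᶜ.card = k := by
    have := card_compl v.1
    simp only [Fintype.card_fin, v.2] at this
    omega
  have hnbrs : ((oddGraph k).neighborFinset v).card = (powersetCard (k - 1) v.1ᶜ).card := by
    refine card_bij (fun w _ => w.1) (fun w hw => ?_) (fun _ _ _ _ => Subtype.ext) fun t ht => ?_
    · rw [mem_neighborFinset, oddGraph_adj_iff hk] at hw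
      exact mem_powersetCard.2 ⟨le_compl_iff_disjoint_right.2 hw.symm, w.2⟩
    · obtain ⟨hsub, hcard⟩ := mem_powersetCard.1 ht
      refine ⟨⟨t, hcard⟩, ?_, rfl⟩
      rw [mem_neighborFinset, oddGraph_adj_iff hk]
      exact (le_compl_iff_disjoint_right.1 hsub).symm
  rw [← card_neighborFinset_eq_degree, hnbrs, card_powersetCard, hcompl,
    Nat.choose_symm (by omega), Nat.choose_one_right]

theorem stmt_15 (k : ℕ) (hk : 2 ≤ k) (hpow : ∃ m : ℕ, k = 2 ^ m) :
    ¬ ∃ c : Sym2 {s : Finset (Fin (2 * k - 1)) // s.card = k - 1} → Fin k,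
      IsProperEdgeColoring (oddGraph k) c := by
  rintro ⟨c, hc⟩
  have : NeZero k := ⟨by omega⟩
  have heven := hc.even_card (by simpa using oddGraph_isRegularOfDegree hk)
  rw [Fintype.card_finset_len, Fintype.card_fin] at heven
  obtain ⟨m, rfl⟩ := hpow
  have hodd : Odd ((2 ^ (m + 1) - 1).choose (2 ^ m - 1)) :=
    odd_choose_two_pow_sub_one (m + 1) (by rw [pow_succ]; omega)
  rw [pow_succ, mul_comm] at hodd
  exact Nat.not_even_iff_odd.2 hodd heven
end
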